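/- arXiv:0901.1342 — 2 statements merged into one kernel-verified Lean document; each statement's English description precedes it below -/
import Mathlib

section
/- Suppose (1/t)·log R_t(θ) → −h(θ) uniformly in θ on a measurable set G ⊆ Θ with Π₀(G) > 0, P-almost surely, where h ≥ 0 is measurable. Then P-almost surely, limsup_t (1/t)·log ∫_G R_t(θ) dΠ₀(θ) ≤ −essinf_{θ∈G} h(θ). -/
open MeasureTheory Filter
open scoped ENNReal

/-!
Write `m` for the essential infimum of `h` on `G`. Once `t` is large, uniform convergence squeezes
`R_t` between `exp (-t (h + δ))` and `exp (-t (h - δ))` on `G`, so `∫_G R_t ≤ exp (-t (m - δ))`,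
which bounds the limsup. Conversely `R_t ≥ exp (-t (m + 2δ))` on `G ∩ {h < m + δ}`, a set of
positive prior mass; this lower bound keeps `log (∫_G R_t) / t` bounded below, without which
`limsup` in `ℝ` would take its junk value `0`.
-/

namespace Real

lemma log_div_le_iff_le_exp_mul {x t a : ℝ} (hx : 0 < x) (ht : 0 < t) :
    log x / t ≤ a ↔ x ≤ exp (t * a) := by
  rw [div_le_iff₀ ht, mul_comm, log_le_iff_le_exp hx]

lemma le_log_div_iff_exp_mul_le {x t a : ℝ} (hx : 0 < x) (ht : 0 < t) :
    a ≤ log x / t ↔ exp (t * a) ≤ x := by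
  rw [le_div_iff₀ ht, mul_comm, le_log_iff_exp_le hx]

lemma le_exp_mul_of_log_div_le {x t a : ℝ} (hx : 0 ≤ x) (ht : 0 < t) (h : log x / t ≤ a) :
    x ≤ exp (t * a) := by
  rcases hx.eq_or_lt with rfl | hx
  · exact (exp_pos _).le
  · exact (log_div_le_iff_le_exp_mul hx ht).1 h

lemma pos_of_abs_log_div_add_lt {x t c δ : ℝ} (hx : 0 ≤ x) (hlog : |log x / t + c| < δ)
    (hδ : δ ≤ |c|) : 0 < x := by
  refine hx.lt_of_ne fun hx0 => ?_
  rw [← hx0, log_zero, zero_div, zero_add] at hlog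
  linarith

/-- `limsup u f = 0` when `u` is not frequently bounded below, hence the alternative `0 ≤ a`. -/
lemma limsup_le_of_forall_eventually_le_add {ι : Type*} {f : Filter ι} {u : ι → ℝ} {a : ℝ}
    (hbdd : f.IsCoboundedUnder (· ≤ ·) u ∨ 0 ≤ a) (hu : ∀ ε > 0, ∀ᶠ i in f, u i ≤ a + ε) :
    limsup u f ≤ a := by
  by_cases hc : f.IsCoboundedUnder (· ≤ ·) u
  · exact le_of_forall_pos_le_add fun ε hε => limsup_le_of_le hc (hu ε hε)
  · rw [limsup_of_not_isCoboundedUnder hc]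
    exact hbdd.resolve_left hc

lemma limsup_log_div_le {I : ℕ → ℝ} {a : ℝ} (hI : ∀ t, 0 ≤ I t)
    (hup : ∀ ε > 0, ∀ᶠ t : ℕ in atTop, I t ≤ exp (t * (a + ε)))
    (hlow : a ≠ 0 → ∃ c > 0, ∃ b, ∀ᶠ t : ℕ in atTop, exp (t * b) * c ≤ I t) :
    limsup (fun t : ℕ => log (I t) / t) atTop ≤ a := by
  have hle : ∀ ε > 0, ∀ᶠ t : ℕ in atTop, 0 < I t → log (I t) / t ≤ a + ε := by
    intro ε hε
    filter_upwards [hup ε hε, eventually_gt_atTop 0] with t hIt ht hpos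
    exact (log_div_le_iff_le_exp_mul hpos (Nat.cast_pos.2 ht)).2 hIt
  by_cases ha : a = 0
  · subst ha
    refine limsup_le_of_forall_eventually_le_add (Or.inr le_rfl) fun ε hε => ?_
    filter_upwards [hle ε hε] with t ht
    rcases (hI t).eq_or_lt with h0 | hpos
    · rw [← h0, log_zero, zero_div]
      exact hε.le.trans_eq (zero_add ε).symm
    · exact ht hpos
  obtain ⟨c, hc, b, hb⟩ := hlow ha
  have hpos : ∀ᶠ t : ℕ in atTop, 0 < I t :=
    hb.mono fun t ht => (by positivity : 0 < exp (t * b) * c).trans_le ht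
  refine limsup_le_of_forall_eventually_le_add (Or.inl ?_) fun ε hε =>
    (hle ε hε).and hpos |>.mono fun t ht => ht.1 ht.2
  -- `log (I t) / t ≥ b + log c / t`, and `log c / t → 0`
  have hsmall : ∀ᶠ t : ℕ in atTop, -1 < log c / t :=
    (tendsto_const_div_atTop_nhds_zero_nat (log c)).eventually (lt_mem_nhds (by norm_num))
  refine isCoboundedUnder_le_of_eventually_le atTop (x := b - 1) ?_
  filter_upwards [hb, hsmall, eventually_gt_atTop 0] with t hbt hct ht
  have ht : (0 : ℝ) < t := Nat.cast_pos.2 ht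
  have hlog : t * b + log c ≤ log (I t) := by
    rw [← log_exp (t * b), ← log_mul (exp_pos _).ne' hc.ne']
    exact log_le_log (by positivity) hbt
  rw [lt_div_iff₀ ht] at hct
  rw [le_div_iff₀ ht]
  linarith

end Real

section

variable {Θ : Type*} [MeasurableSpace Θ] {μ : Measure Θ} {G : Set Θ} {f h : Θ → ℝ} {m t δ : ℝ}

lemma setIntegral_le_of_ae_le [IsProbabilityMeasure μ] {C : ℝ} (hf : ∀ θ, 0 ≤ f θ) (hC0 : 0 ≤ C)
    (hC : ∀ᵐ θ ∂μ.restrict G, f θ ≤ C) : ∫ θ in G, f θ ∂μ ≤ C := by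
  have hnorm : ∀ᵐ θ ∂μ.restrict G, ‖f θ‖ ≤ C := by
    filter_upwards [hC] with θ hθ
    rwa [Real.norm_of_nonneg (hf θ)]
  calc ∫ θ in G, f θ ∂μ ≤ ‖∫ θ in G, f θ ∂μ‖ := Real.le_norm_self _
    _ ≤ C * μ.real G := norm_setIntegral_le_of_norm_le_const_ae (measure_lt_top μ G) hnorm
    _ ≤ C * 1 := by gcongr; exact measureReal_le_one
    _ = C := mul_one C

lemma mul_measureReal_le_setIntegral [IsFiniteMeasure μ] {A : Set Θ} {c : ℝ} (hAG : A ⊆ G)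
    (hf : ∀ θ, 0 ≤ f θ) (hint : IntegrableOn f G μ) (hc : ∀ᵐ θ ∂μ.restrict A, c ≤ f θ) :
    c * μ.real A ≤ ∫ θ in G, f θ ∂μ :=
  calc c * μ.real A = ∫ _ in A, c ∂μ := by rw [setIntegral_const, smul_eq_mul, mul_comm]
    _ ≤ ∫ θ in A, f θ ∂μ := integral_mono_ae (integrable_const c) (hint.mono_set hAG) hc
    _ ≤ ∫ θ in G, f θ ∂μ :=
      setIntegral_mono_set hint (.of_forall hf) (.of_forall hAG)

open Real

lemma ae_le_exp_mul_of_abs_log_div_add_lt (hG : MeasurableSet G) (hf : ∀ θ, 0 ≤ f θ)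
    (ht : 0 < t) (hm : ∀ᵐ θ ∂μ.restrict G, m ≤ h θ)
    (hclose : ∀ θ ∈ G, |log (f θ) / t + h θ| < δ) :
    ∀ᵐ θ ∂μ.restrict G, f θ ≤ exp (t * (-m + δ)) := by
  filter_upwards [hm, ae_restrict_mem hG] with θ hmθ hθG
  refine le_exp_mul_of_log_div_le (hf θ) ht ?_
  linarith [(abs_lt.1 (hclose θ hθG)).2]

lemma ae_exp_mul_le_of_abs_log_div_add_lt (hG : MeasurableSet G) (hh : Measurable h)
    (hf : ∀ θ, 0 ≤ f θ) (ht : 0 < t) (hδ : 2 * δ ≤ |m|) (hm : ∀ᵐ θ ∂μ.restrict G, m ≤ h θ)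
    (hclose : ∀ θ ∈ G, |log (f θ) / t + h θ| < δ) :
    ∀ᵐ θ ∂μ.restrict (G ∩ {θ | h θ < m + δ}), exp (t * (-m - 2 * δ)) ≤ f θ := by
  filter_upwards [ae_restrict_of_ae_restrict_of_subset Set.inter_subset_left hm,
    ae_restrict_mem (hG.inter (measurableSet_lt hh measurable_const))]
    with θ hmθ ⟨hθG, hθA⟩
  have hθA : h θ < m + δ := hθA
  have hlog := abs_lt.1 (hclose θ hθG)
  have hδh : δ ≤ |h θ| := by
    cases abs_cases m <;> cases abs_cases (h θ) <;> linarith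
  have hpos := pos_of_abs_log_div_add_lt (hf θ) (hclose θ hθG) hδh
  exact (le_log_div_iff_exp_mul_le hpos ht).1 (by linarith)

theorem limsup_log_setIntegral_le_of_tendstoUniformlyOn [IsProbabilityMeasure μ]
    {r : ℕ → Θ → ℝ} (hr_meas : ∀ t, AEStronglyMeasurable (r t) (μ.restrict G))
    (hr : ∀ t θ, 0 ≤ r t θ) (hh : Measurable h) (hG : MeasurableSet G)
    (hm : ∀ᵐ θ ∂μ.restrict G, m ≤ h θ)
    (hm_approx : ∀ ε > 0, μ.restrict G {θ | h θ < m + ε} ≠ 0)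
    (hconv : TendstoUniformlyOn (fun (t : ℕ) θ => log (r t θ) / t) (fun θ => -h θ) atTop G) :
    limsup (fun t : ℕ => log (∫ θ in G, r t θ ∂μ) / t) atTop ≤ -m := by
  have hclose : ∀ δ > 0, ∀ᶠ t : ℕ in atTop,
      0 < (t : ℝ) ∧ ∀ θ ∈ G, |log (r t θ) / t + h θ| < δ := by
    intro δ hδ
    filter_upwards [Metric.tendstoUniformlyOn_iff.1 hconv δ hδ, eventually_gt_atTop 0]
      with t ht ht0
    refine ⟨Nat.cast_pos.2 ht0, fun θ hθ => ?_⟩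
    have := ht θ hθ
    rwa [Real.dist_eq, ← abs_neg, neg_sub, sub_neg_eq_add] at this
  refine limsup_log_div_le (fun t => integral_nonneg (hr t)) (fun ε hε => ?_) fun hm0 => ?_
  · filter_upwards [hclose ε hε] with t ⟨ht, hθ⟩
    exact setIntegral_le_of_ae_le (hr t) (exp_pos _).le
      (ae_le_exp_mul_of_abs_log_div_add_lt hG (hr t) ht hm hθ)
  set δ := |m| / 2 with hδ_def
  have hδ : 0 < δ := half_pos (abs_pos.2 (neg_ne_zero.1 hm0))
  have hA_pos : 0 < μ.real (G ∩ {θ | h θ < m + δ}) := by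
    have := hm_approx δ hδ
    rw [Measure.restrict_apply (measurableSet_lt hh measurable_const), Set.inter_comm] at this
    exact ENNReal.toReal_pos this (measure_ne_top μ _)
  refine ⟨_, hA_pos, -m - 2 * δ, ?_⟩
  filter_upwards [hclose δ hδ] with t ⟨ht, hθ⟩
  have hint : IntegrableOn (r t) G μ :=
    Integrable.of_bound (hr_meas t) (exp (t * (-m + δ))) <| by
      filter_upwards [ae_le_exp_mul_of_abs_log_div_add_lt hG (hr t) ht hm hθ] with θ hθ
      rwa [Real.norm_of_nonneg (hr t θ)]
  exact mul_measureReal_le_setIntegral Set.inter_subset_left (hr t) hint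
    (ae_exp_mul_le_of_abs_log_div_add_lt hG hh (hr t) ht (by linarith) hm hθ)

end

theorem limsup_integrated_likelihood_on_good_set_general
    {Θ Ω : Type*} [MeasurableSpace Θ] [MeasurableSpace Ω]
    (P : Measure Ω)
    (prior : Measure Θ) [IsProbabilityMeasure prior]
    (R : ℕ → Θ → Ω → ℝ)
    (hRmeas : ∀ t, Measurable (Function.uncurry (R t)))
    (hRnn : ∀ t θ ω, 0 ≤ R t θ ω)
    (h : Θ → ℝ) (hhmeas : Measurable h)
    (G : Set Θ) (hGmeas : MeasurableSet G)
    (hG : ℝ)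
    -- `hG` is the essential infimum of `h` over `G` (w.r.t. `prior`):
    (hG_le : ∀ᵐ θ ∂prior.restrict G, hG ≤ h θ)
    (hG_approx : ∀ ε > (0 : ℝ), prior.restrict G {θ | h θ < hG + ε} ≠ 0)
    -- a.s. uniform convergence of the time-averaged log-likelihood ratio on G:
    (hunif : ∀ᵐ ω ∂P,
      TendstoUniformlyOn (fun (t : ℕ) (θ : Θ) => Real.log (R t θ ω) / t)
        (fun θ => -h θ) atTop G) :
    ∀ᵐ ω ∂P,
      limsup (fun t : ℕ => Real.log (∫ θ in G, R t θ ω ∂prior) / t) atTop ≤ -hG := by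
  filter_upwards [hunif] with ω hω
  exact limsup_log_setIntegral_le_of_tendstoUniformlyOn
    (fun t => ((hRmeas t).comp measurable_prodMk_right).aestronglyMeasurable)
    (fun t θ => hRnn t θ ω) hhmeas hGmeas hG_le hG_approx hω

/-- If `(1/t) log R_t(θ) → −h(θ)` uniformly in `θ` on a set `G` of positive
prior measure (P-a.s.), then P-a.s.
`limsup (1/t) log ∫_G R_t dΠ₀ ≤ −essinf_{θ∈G} h(θ)`. -/
theorem limsup_integrated_likelihood_on_good_set
    {Θ Ω : Type*} [MeasurableSpace Θ] [MeasurableSpace Ω]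
    (P : Measure Ω) [IsProbabilityMeasure P]
    (prior : Measure Θ) [IsProbabilityMeasure prior]
    (R : ℕ → Θ → Ω → ℝ)
    (hRmeas : ∀ t, Measurable (Function.uncurry (R t)))
    (hRnn : ∀ t θ ω, 0 ≤ R t θ ω)
    (h : Θ → ℝ) (hhmeas : Measurable h) (hhnn : ∀ θ, 0 ≤ h θ)
    (G : Set Θ) (hGmeas : MeasurableSet G) (hGpos : prior G ≠ 0)
    (hG : ℝ)
    -- `hG` is the essential infimum of `h` over `G` (w.r.t. `prior`):
    (hG_le : ∀ᵐ θ ∂prior.restrict G, hG ≤ h θ)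
    (hG_approx : ∀ ε > (0 : ℝ), prior.restrict G {θ | h θ < hG + ε} ≠ 0)
    -- a.s. uniform convergence of the time-averaged log-likelihood ratio on G:
    (hunif : ∀ᵐ ω ∂P,
      TendstoUniformlyOn (fun (t : ℕ) (θ : Θ) => Real.log (R t θ ω) / t)
        (fun θ => -h θ) atTop G) :
    ∀ᵐ ω ∂P,
      limsup (fun t : ℕ => Real.log (∫ θ in G, R t θ ω ∂prior) / t) atTop ≤ -hG :=
  limsup_integrated_likelihood_on_good_set_general P prior R hRmeas hRnn h hhmeas G hGmeas hG hG_le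
    hG_approx hunif
end

section
/- Let ρ_H denote Hellinger distance and D Kullback–Leibler divergence. Suppose Π_t is a sequence of probability measures on Θ, P^t and F_θ^t are the true and model one-step predictive distributions, ρ_H² (P^t, F_θ^t) ≤ d(θ) for a measurable function d, and for every ε > essinf d, Π_t({θ : ρ_H²(t,θ) > ε}) → 0 a.s. Then the mixture predictive distribution F^t_Π = ∫ F_θ^t dΠ_t(θ) satisfies limsup_t ρ_H²(P^t, F^t_Π) ≤ essinf d almost surely, using convexity of squared Hellinger distance and Jensen's inequality. -/
/-! The Hellinger affinity `A(P, Q) = ∫ √(dP dQ) = 1 - ρ_H²(P, Q)` has the variational form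
`A(P, Q) = inf_g ½ (∫ g dP + ∫ g⁻¹ dQ)` (AM–GM, with equality at `g = √(dQ/dP)`).
As an infimum of functions affine in `Q` it is concave in `Q`, so for a mixture
`A(P, ∫ F_θ dΠ) ≥ ∫ A(P, F_θ) dΠ ≥ (1 - ε) Π{θ : ρ_H²(P, F_θ) ≤ ε}`, that is
`ρ_H²(P, ∫ F_θ dΠ) ≤ ε + (1 - ε) Π{θ : ρ_H²(P, F_θ) > ε}`.
Posterior concentration makes the last mass vanish for every `ε > m`. -/

open MeasureTheory Filter
open scoped ENNReal

/-- Squared Hellinger distance between two measures, `1 − ∫ √(dP dQ)`,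
computed with densities w.r.t. the dominating measure `P + Q`. -/
noncomputable def hellingerSq {X : Type*} [MeasurableSpace X]
    (P Q : Measure X) : ℝ :=
  1 - ∫ x, Real.sqrt ((P.rnDeriv (P + Q) x).toReal * (Q.rnDeriv (P + Q) x).toReal)
        ∂(P + Q)

namespace ENNReal

theorem sqrt_mul_le_half_add (u v : ℝ≥0∞) : (u * v) ^ (1/2 : ℝ) ≤ 2⁻¹ * (u + v) := by
  have hsq (x : ℝ≥0∞) : (x ^ (1/2 : ℝ)) ^ (2 : ℝ) = x := by rw [← rpow_mul]; norm_num
  calc (u * v) ^ (1/2 : ℝ) = u ^ (1/2 : ℝ) * v ^ (1/2 : ℝ) :=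
        mul_rpow_of_nonneg _ _ (by norm_num)
    _ ≤ (u ^ (1/2 : ℝ)) ^ (2 : ℝ) / ENNReal.ofReal 2
          + (v ^ (1/2 : ℝ)) ^ (2 : ℝ) / ENNReal.ofReal 2 :=
        young_inequality _ _ Real.HolderConjugate.two_two
    _ = 2⁻¹ * (u + v) := by
        rw [hsq, hsq, ofReal_ofNat, ENNReal.div_add_div_same, ENNReal.div_eq_inv_mul]

theorem sqrt_mul_le_half_mul_add_inv_mul (a u v : ℝ≥0∞) :
    (u * v) ^ (1/2 : ℝ) ≤ 2⁻¹ * (a * u + a⁻¹ * v) := by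
  rcases eq_or_ne a 0 with rfl | ha0
  · rcases eq_or_ne v 0 with rfl | hv <;> simp [*]
  rcases eq_or_ne a ⊤ with rfl | hatop
  · rcases eq_or_ne u 0 with rfl | hu <;> simp [*]
  calc (u * v) ^ (1/2 : ℝ) = ((a * u) * (a⁻¹ * v)) ^ (1/2 : ℝ) := by
        rw [mul_mul_mul_comm, ENNReal.mul_inv_cancel ha0 hatop, one_mul]
    _ ≤ 2⁻¹ * (a * u + a⁻¹ * v) := sqrt_mul_le_half_add _ _

theorem mul_sqrt_div_le_sqrt_mul {x : ℝ≥0∞} (y : ℝ≥0∞) (hx : x ≠ ⊤) :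
    x * (y / x) ^ (1/2 : ℝ) ≤ (x * y) ^ (1/2 : ℝ) := by
  rcases eq_or_ne x 0 with rfl | hx0
  · simp
  have hx_sq : (x * x) ^ (1/2 : ℝ) = x := by
    rw [← pow_two, ← rpow_natCast, ← rpow_mul]; norm_num
  refine le_of_eq ?_
  calc x * (y / x) ^ (1/2 : ℝ) = (x * x * (y / x)) ^ (1/2 : ℝ) := by
        rw [mul_rpow_of_nonneg _ _ (by norm_num), hx_sq]
    _ = (x * y) ^ (1/2 : ℝ) := by rw [mul_assoc, ENNReal.mul_div_cancel hx0 hx]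

theorem mul_inv_sqrt_div_le_sqrt_mul (x : ℝ≥0∞) {y : ℝ≥0∞} (hy : y ≠ ⊤) :
    y * ((y / x) ^ (1/2 : ℝ))⁻¹ ≤ (x * y) ^ (1/2 : ℝ) := by
  rcases eq_or_ne y 0 with rfl | hy0
  · simp
  rw [← inv_rpow, ENNReal.inv_div (Or.inr hy) (Or.inr hy0), mul_comm x y]
  exact mul_sqrt_div_le_sqrt_mul x hy

end ENNReal

section Hellinger

variable {X Θ : Type*} [MeasurableSpace X] [MeasurableSpace Θ]

noncomputable def hellingerAffinity (P Q : Measure X) : ℝ≥0∞ :=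
  ∫⁻ x, (P.rnDeriv (P + Q) x * Q.rnDeriv (P + Q) x) ^ (1/2 : ℝ) ∂(P + Q)

theorem hellingerSq_eq_one_sub_hellingerAffinity (P Q : Measure X) [SigmaFinite P]
    [SigmaFinite Q] : hellingerSq P Q = 1 - (hellingerAffinity P Q).toReal := by
  rw [hellingerSq, hellingerAffinity, ← integral_toReal]
  · congr 1
    refine integral_congr_ae (.of_forall fun x => ?_)
    simp only [← ENNReal.toReal_mul, Real.sqrt_eq_rpow, ENNReal.toReal_rpow]
  · exact (((Measure.measurable_rnDeriv _ _).mul (Measure.measurable_rnDeriv _ _)).pow_const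
      _).aemeasurable
  · filter_upwards [Measure.rnDeriv_lt_top P (P + Q), Measure.rnDeriv_lt_top Q (P + Q)]
      with x hP hQ
    exact ENNReal.rpow_lt_top_of_nonneg (by norm_num) (ENNReal.mul_lt_top hP hQ).ne

theorem hellingerAffinity_le_one (P Q : Measure X) [IsProbabilityMeasure P]
    [IsProbabilityMeasure Q] : hellingerAffinity P Q ≤ 1 := by
  calc hellingerAffinity P Q
      ≤ ∫⁻ x, 2⁻¹ * (P.rnDeriv (P + Q) x + Q.rnDeriv (P + Q) x) ∂(P + Q) :=
        lintegral_mono fun x => ENNReal.sqrt_mul_le_half_add _ _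
    _ = 2⁻¹ * (∫⁻ x, P.rnDeriv (P + Q) x ∂(P + Q)
          + ∫⁻ x, Q.rnDeriv (P + Q) x ∂(P + Q)) := by
        rw [lintegral_const_mul' _ _ (by simp),
          lintegral_add_left (Measure.measurable_rnDeriv _ _)]
    _ ≤ 2⁻¹ * (1 + 1) := by
        gcongr <;> exact Measure.lintegral_rnDeriv_le.trans_eq measure_univ
    _ = 1 := by
        rw [one_add_one_eq_two, ENNReal.inv_mul_cancel two_ne_zero ENNReal.ofNat_ne_top]

theorem hellingerSq_nonneg (P Q : Measure X) [IsProbabilityMeasure P] [IsProbabilityMeasure Q] :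
    0 ≤ hellingerSq P Q := by
  rw [hellingerSq_eq_one_sub_hellingerAffinity, sub_nonneg]
  exact ENNReal.toReal_le_of_le_ofReal zero_le_one (by simpa using hellingerAffinity_le_one P Q)

theorem hellingerSq_le_one (P Q : Measure X) [SigmaFinite P] [SigmaFinite Q] :
    hellingerSq P Q ≤ 1 := by
  rw [hellingerSq_eq_one_sub_hellingerAffinity]
  linarith [ENNReal.toReal_nonneg (a := hellingerAffinity P Q)]

theorem hellingerAffinity_le_half_lintegral_add (P Q : Measure X) [SigmaFinite P]
    [SigmaFinite Q] {g : X → ℝ≥0∞} (hg : Measurable g) :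
    hellingerAffinity P Q ≤ 2⁻¹ * (∫⁻ x, g x ∂P + ∫⁻ x, (g x)⁻¹ ∂Q) := by
  set p := P.rnDeriv (P + Q)
  set q := Q.rnDeriv (P + Q)
  calc hellingerAffinity P Q ≤ ∫⁻ x, 2⁻¹ * (g x * p x + (g x)⁻¹ * q x) ∂(P + Q) :=
        lintegral_mono fun x => ENNReal.sqrt_mul_le_half_mul_add_inv_mul _ _ _
    _ = 2⁻¹ * (∫⁻ x, p x * g x ∂(P + Q) + ∫⁻ x, q x * (g x)⁻¹ ∂(P + Q)) := by
        rw [← lintegral_add_left (f := fun x => p x * g x)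
            ((Measure.measurable_rnDeriv _ _).mul hg),
          ← lintegral_const_mul' _ _ (by simp)]
        exact lintegral_congr fun x => by ring
    _ = 2⁻¹ * (∫⁻ x, g x ∂P + ∫⁻ x, (g x)⁻¹ ∂Q) := by
        rw [lintegral_rnDeriv_mul (Measure.AbsolutelyContinuous.rfl.add_right Q)
            hg.aemeasurable,
          lintegral_rnDeriv_mul (f := fun x => (g x)⁻¹)
            (Measure.AbsolutelyContinuous.rfl.add_right' P) hg.inv.aemeasurable]

theorem hellingerAffinity_eq_iInf (P Q : Measure X) [SigmaFinite P] [SigmaFinite Q] :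
    hellingerAffinity P Q =
      ⨅ (g : X → ℝ≥0∞) (_ : Measurable g), 2⁻¹ * (∫⁻ x, g x ∂P + ∫⁻ x, (g x)⁻¹ ∂Q) := by
  refine le_antisymm (le_iInf₂ fun g hg => hellingerAffinity_le_half_lintegral_add P Q hg) ?_
  set p := P.rnDeriv (P + Q)
  set q := Q.rnDeriv (P + Q)
  set g : X → ℝ≥0∞ := fun x => (q x / p x) ^ (1/2 : ℝ)
  have hg : Measurable g :=
    ((Measure.measurable_rnDeriv _ _).div (Measure.measurable_rnDeriv _ _)).pow_const _
  have hP : ∫⁻ x, g x ∂P ≤ hellingerAffinity P Q := by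
    rw [← lintegral_rnDeriv_mul (Measure.AbsolutelyContinuous.rfl.add_right Q)
      hg.aemeasurable]
    refine lintegral_mono_ae ?_
    filter_upwards [Measure.rnDeriv_lt_top P (P + Q)] with x hx
    exact ENNReal.mul_sqrt_div_le_sqrt_mul _ hx.ne
  have hQ : ∫⁻ x, (g x)⁻¹ ∂Q ≤ hellingerAffinity P Q := by
    rw [← lintegral_rnDeriv_mul (f := fun x => (g x)⁻¹)
      (Measure.AbsolutelyContinuous.rfl.add_right' P) hg.inv.aemeasurable]
    refine lintegral_mono_ae ?_
    filter_upwards [Measure.rnDeriv_lt_top Q (P + Q)] with x hx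
    exact ENNReal.mul_inv_sqrt_div_le_sqrt_mul _ hx.ne
  calc ⨅ (g : X → ℝ≥0∞) (_ : Measurable g), 2⁻¹ * (∫⁻ x, g x ∂P + ∫⁻ x, (g x)⁻¹ ∂Q)
      ≤ 2⁻¹ * (∫⁻ x, g x ∂P + ∫⁻ x, (g x)⁻¹ ∂Q) := iInf₂_le g hg
    _ ≤ 2⁻¹ * (hellingerAffinity P Q + hellingerAffinity P Q) := by gcongr
    _ = hellingerAffinity P Q := by
        rw [← two_mul, ← mul_assoc, ENNReal.inv_mul_cancel two_ne_zero ENNReal.ofNat_ne_top,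
          one_mul]

theorem lintegral_hellingerAffinity_le_bind (P : Measure X) [SigmaFinite P] (μ : Measure Θ)
    [IsProbabilityMeasure μ] {Q : Θ → Measure X} (hQ : Measurable Q)
    [∀ θ, IsProbabilityMeasure (Q θ)] :
    ∫⁻ θ, hellingerAffinity P (Q θ) ∂μ ≤ hellingerAffinity P (μ.bind Q) := by
  have : IsProbabilityMeasure (μ.bind Q) :=
    isProbabilityMeasure_bind hQ.aemeasurable (.of_forall fun _ => inferInstance)
  rw [hellingerAffinity_eq_iInf P (μ.bind Q)]
  refine le_iInf₂ fun g hg => ?_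
  calc ∫⁻ θ, hellingerAffinity P (Q θ) ∂μ
      ≤ ∫⁻ θ, 2⁻¹ * (∫⁻ x, g x ∂P + ∫⁻ x, (g x)⁻¹ ∂(Q θ)) ∂μ :=
        lintegral_mono fun θ => hellingerAffinity_le_half_lintegral_add P (Q θ) hg
    _ = 2⁻¹ * (∫⁻ x, g x ∂P + ∫⁻ x, (g x)⁻¹ ∂(μ.bind Q)) := by
        rw [lintegral_const_mul' _ _ (by simp), lintegral_add_left measurable_const,
          lintegral_const, measure_univ, mul_one,
          Measure.lintegral_bind (f := fun x => (g x)⁻¹) hQ.aemeasurable hg.inv.aemeasurable]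

theorem hellingerSq_bind_le (P : Measure X) [IsProbabilityMeasure P] (μ : Measure Θ)
    [IsProbabilityMeasure μ] {Q : Θ → Measure X} (hQ : Measurable Q)
    [∀ θ, IsProbabilityMeasure (Q θ)] (c : ℝ) {S : Set Θ}
    (hS : ∀ θ ∉ S, hellingerSq P (Q θ) ≤ c) :
    hellingerSq P (μ.bind Q) ≤ c + (1 - c) * μ.real S := by
  have : IsProbabilityMeasure (μ.bind Q) :=
    isProbabilityMeasure_bind hQ.aemeasurable (.of_forall fun _ => inferInstance)
  have hS_le_one : μ.real S ≤ 1 := measureReal_le_one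
  rcases lt_or_ge 1 c with hc | hc
  · nlinarith [hellingerSq_le_one P (μ.bind Q)]
  set S' := toMeasurable μ S
  have hS' : MeasurableSet S' := measurableSet_toMeasurable μ S
  have haff : ENNReal.ofReal (1 - c) * μ S'ᶜ ≤ hellingerAffinity P (μ.bind Q) :=
    calc ENNReal.ofReal (1 - c) * μ S'ᶜ = ∫⁻ _ in S'ᶜ, ENNReal.ofReal (1 - c) ∂μ :=
          (setLIntegral_const _ _).symm
      _ ≤ ∫⁻ θ in S'ᶜ, hellingerAffinity P (Q θ) ∂μ := by
          refine setLIntegral_mono' hS'.compl fun θ hθ => ENNReal.ofReal_le_of_le_toReal ?_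
          have := hS θ fun hθS => hθ (subset_toMeasurable μ S hθS)
          rw [hellingerSq_eq_one_sub_hellingerAffinity] at this
          linarith
      _ ≤ ∫⁻ θ, hellingerAffinity P (Q θ) ∂μ := setLIntegral_le_lintegral _ _
      _ ≤ hellingerAffinity P (μ.bind Q) := lintegral_hellingerAffinity_le_bind P μ hQ
  have hS'_real : μ.real S'ᶜ = 1 - μ.real S := by
    rw [probReal_compl_eq_one_sub hS', measureReal_def, measureReal_def, measure_toMeasurable]
  have haff_real := ENNReal.toReal_mono
    (ne_top_of_le_ne_top ENNReal.one_ne_top (hellingerAffinity_le_one P (μ.bind Q))) haff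
  rw [ENNReal.toReal_mul, ENNReal.toReal_ofReal (by linarith), ← measureReal_def,
    hS'_real] at haff_real
  rw [hellingerSq_eq_one_sub_hellingerAffinity]
  linarith

theorem limsup_hellingerSq_bind_le {ι : Type*} {l : Filter ι} [l.NeBot]
    {P : ι → Measure X} [∀ t, IsProbabilityMeasure (P t)]
    {μ : ι → Measure Θ} [∀ t, IsProbabilityMeasure (μ t)]
    {Q : ι → Θ → Measure X} (hQ : ∀ t, Measurable (Q t)) [∀ t θ, IsProbabilityMeasure (Q t θ)]
    {c : ℝ} (hconc : Tendsto (fun t => μ t {θ | c < hellingerSq (P t) (Q t θ)}) l (nhds 0)) :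
    limsup (fun t => hellingerSq (P t) ((μ t).bind (Q t))) l ≤ c := by
  set s := fun t => (μ t).real {θ | c < hellingerSq (P t) (Q t θ)}
  have hs : Tendsto s l (nhds 0) := (ENNReal.tendsto_toReal ENNReal.zero_ne_top).comp hconc
  have hbound : Tendsto (fun t => c + (1 - c) * s t) l (nhds c) := by
    simpa using tendsto_const_nhds.add (hs.const_mul (1 - c))
  calc limsup (fun t => hellingerSq (P t) ((μ t).bind (Q t))) l
      ≤ limsup (fun t => c + (1 - c) * s t) l := by
        refine limsup_le_limsup (.of_forall fun t => ?_) ?_ hbound.isBoundedUnder_le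
        · exact hellingerSq_bind_le (P t) (μ t) (hQ t) c fun θ hθ => not_lt.1 hθ
        · have (t : ι) : IsProbabilityMeasure ((μ t).bind (Q t)) :=
            isProbabilityMeasure_bind (hQ t).aemeasurable (.of_forall fun _ => inferInstance)
          exact isCoboundedUnder_le_of_le l fun t => hellingerSq_nonneg _ _
    _ = c := hbound.limsup_eq

end Hellinger

theorem predictive_hellinger_bound_general
    {Θ X Ω : Type*} [MeasurableSpace Θ] [MeasurableSpace X] [MeasurableSpace Ω]
    (P : Measure Ω)
    -- the (random) posterior distributions, true predictive distributions,
    -- and model predictive distributions: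
    (post : ℕ → Ω → Measure Θ) (hpost : ∀ t ω, IsProbabilityMeasure (post t ω))
    (Ptrue : ℕ → Ω → Measure X) (hPtrue : ∀ t ω, IsProbabilityMeasure (Ptrue t ω))
    (F : Θ → ℕ → Ω → Measure X) (hF : ∀ θ t ω, IsProbabilityMeasure (F θ t ω))
    (hFmeas : ∀ t ω, Measurable (fun θ => F θ t ω))
    (m : ℝ)
    -- posterior concentration on low-Hellinger hypotheses:
    (hconc : ∀ ε : ℝ, m < ε → ∀ᵐ ω ∂P,
      Tendsto (fun t : ℕ =>
          post t ω {θ | ε < hellingerSq (Ptrue t ω) (F θ t ω)}) atTop (nhds 0)) :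
    ∀ᵐ ω ∂P,
      limsup (fun t : ℕ =>
          hellingerSq (Ptrue t ω) ((post t ω).bind (fun θ => F θ t ω))) atTop ≤ m := by
  have hconc_rat : ∀ᵐ ω ∂P, ∀ q : ℚ, m < q → Tendsto (fun t : ℕ =>
      post t ω {θ | q < hellingerSq (Ptrue t ω) (F θ t ω)}) atTop (nhds 0) :=
    ae_all_iff.2 fun q => eventually_imp_distrib_left.2 (hconc q)
  filter_upwards [hconc_rat] with ω hω
  have := fun t => hpost t ω
  have := fun t => hPtrue t ω
  have := fun t θ => hF θ t ω
  exact le_of_forall_lt_rat_imp_le fun q hq =>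
    limsup_hellingerSq_bind_le (fun t => hFmeas t ω) (hω q hq)

/-- Generalization performance of the posterior predictive distribution: if
`ρ_H²(P^t, F_θ^t) ≤ d(θ)` for a measurable `d` with essential infimum `m`
(w.r.t. the prior), and for every `ε > m` the posterior mass of
`{θ : ρ_H²(P^t, F_θ^t) > ε}` tends to `0` a.s., then the mixture predictive
distribution `F_Π^t = ∫ F_θ^t dΠ_t` satisfies
`limsup_t ρ_H²(P^t, F_Π^t) ≤ m` almost surely. -/
theorem predictive_hellinger_bound
    {Θ X Ω : Type*} [MeasurableSpace Θ] [MeasurableSpace X] [MeasurableSpace Ω]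
    (P : Measure Ω) [IsProbabilityMeasure P]
    (prior : Measure Θ) [IsProbabilityMeasure prior]
    -- the (random) posterior distributions, true predictive distributions,
    -- and model predictive distributions:
    (post : ℕ → Ω → Measure Θ) (hpost : ∀ t ω, IsProbabilityMeasure (post t ω))
    (Ptrue : ℕ → Ω → Measure X) (hPtrue : ∀ t ω, IsProbabilityMeasure (Ptrue t ω))
    (F : Θ → ℕ → Ω → Measure X) (hF : ∀ θ t ω, IsProbabilityMeasure (F θ t ω))
    (hFmeas : ∀ t ω, Measurable (fun θ => F θ t ω))
    (d : Θ → ℝ) (hdmeas : Measurable d)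
    -- `m` is the essential infimum of `d` w.r.t. the prior:
    (m : ℝ)
    (hm_le : ∀ᵐ θ ∂prior, m ≤ d θ)
    (hm_approx : ∀ ε > (0 : ℝ), prior {θ | d θ < m + ε} ≠ 0)
    -- domination of the squared Hellinger distances:
    (hdom : ∀ t ω θ, hellingerSq (Ptrue t ω) (F θ t ω) ≤ d θ)
    -- posterior concentration on low-Hellinger hypotheses:
    (hconc : ∀ ε : ℝ, m < ε → ∀ᵐ ω ∂P,
      Tendsto (fun t : ℕ =>
          post t ω {θ | ε < hellingerSq (Ptrue t ω) (F θ t ω)}) atTop (nhds 0)) :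
    ∀ᵐ ω ∂P,
      limsup (fun t : ℕ =>
          hellingerSq (Ptrue t ω) ((post t ω).bind (fun θ => F θ t ω))) atTop ≤ m :=
  predictive_hellinger_bound_general P post hpost Ptrue hPtrue F hF hFmeas m hconc
end
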